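/- Let M, Y₁ⁿ, Y₂ⁿ, S₁ⁿ, S₂ⁿ, and per-coordinate inputs Xᵢ be discrete random variables such that for each i, S₁ᵢ → (Y₁ᵢ, Y₂ᵢ, S₂ᵢ, Xᵢ) → (Y₁^{n∖i}, Y₂^{n∖i}, S₂^{n∖i}, M, S₁^{i−1}) forms a Markov chain, and I(M; Y₂ⁿ, S₂ⁿ) ≤ δ. Then I(M; Y₁ⁿ, Y₂ⁿ, S₁ⁿ, S₂ⁿ) ≤ Σᵢ [ H(Y₁ᵢ, S₁ᵢ | Y₂ᵢ, S₂ᵢ) − H(S₁ᵢ | Y₁ᵢ, Y₂ᵢ, S₂ᵢ, Xᵢ) ] + δ. -/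

import Mathlib

open Finset

/-- Probability that a discrete random variable `X` takes value `x`,
under the probability mass function `μ` on a finite sample space. -/
noncomputable def prob {Ω α : Type*} [Fintype Ω] [DecidableEq α]
    (μ : Ω → ℝ) (X : Ω → α) (x : α) : ℝ :=
  ∑ ω ∈ Finset.univ.filter (fun ω => X ω = x), μ ω

/-- `μ` is a probability mass function on the finite sample space `Ω`. -/
def IsPMF {Ω : Type*} [Fintype Ω] (μ : Ω → ℝ) : Prop :=
  (∀ ω, 0 ≤ μ ω) ∧ ∑ ω, μ ω = 1

/-- Shannon entropy (natural log) of a discrete random variable. -/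
noncomputable def entH {Ω α : Type*} [Fintype Ω] [Fintype α] [DecidableEq α]
    (μ : Ω → ℝ) (X : Ω → α) : ℝ :=
  ∑ x, -(prob μ X x * Real.log (prob μ X x))

/-- Conditional Shannon entropy `H(X | Y)`. -/
noncomputable def condH {Ω α β : Type*} [Fintype Ω] [Fintype α] [DecidableEq α]
    [Fintype β] [DecidableEq β] (μ : Ω → ℝ) (X : Ω → α) (Y : Ω → β) : ℝ :=
  entH μ (fun ω => (X ω, Y ω)) - entH μ Y

/-- Mutual information `I(X; Y)`. -/
noncomputable def mutInfo {Ω α β : Type*} [Fintype Ω] [Fintype α] [DecidableEq α]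
    [Fintype β] [DecidableEq β] (μ : Ω → ℝ) (X : Ω → α) (Y : Ω → β) : ℝ :=
  entH μ X + entH μ Y - entH μ (fun ω => (X ω, Y ω))

/-- Conditional mutual information `I(X; Y | Z)`. -/
noncomputable def condMutInfo {Ω α β γ : Type*} [Fintype Ω] [Fintype α] [DecidableEq α]
    [Fintype β] [DecidableEq β] [Fintype γ] [DecidableEq γ]
    (μ : Ω → ℝ) (X : Ω → α) (Y : Ω → β) (Z : Ω → γ) : ℝ :=
  condH μ X Z + condH μ Y Z - condH μ (fun ω => (X ω, Y ω)) Z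

/-- `X` and `Y` are independent random variables under `μ`. -/
def IndepRV {Ω α β : Type*} [Fintype Ω] [DecidableEq α] [DecidableEq β]
    (μ : Ω → ℝ) (X : Ω → α) (Y : Ω → β) : Prop :=
  ∀ x y, prob μ (fun ω => (X ω, Y ω)) (x, y) = prob μ X x * prob μ Y y

/-- `A → B → C` forms a Markov chain under `μ`:
`P(A,B,C) P(B) = P(A,B) P(B,C)` pointwise. -/
def MarkovChain {Ω α β γ : Type*} [Fintype Ω] [DecidableEq α] [DecidableEq β] [DecidableEq γ]
    (μ : Ω → ℝ) (A : Ω → α) (B : Ω → β) (C : Ω → γ) : Prop :=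
  ∀ a b c, prob μ (fun ω => (A ω, B ω, C ω)) (a, b, c) * prob μ B b
    = prob μ (fun ω => (A ω, B ω)) (a, b) * prob μ (fun ω => (B ω, C ω)) (b, c)

/-- Binary entropy function (natural log). -/
noncomputable def binEnt (x : ℝ) : ℝ :=
  -(x * Real.log x) - ((1 - x) * Real.log (1 - x))

/-!
Split `I(M; Y₁ⁿS₁ⁿY₂ⁿS₂ⁿ) = I(M; Y₂ⁿS₂ⁿ) + H(Y₁ⁿS₁ⁿ | Y₂ⁿS₂ⁿ) − H(Y₁ⁿS₁ⁿ | Y₂ⁿS₂ⁿM)`. The middle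
term is at most `Σᵢ H(Y₁ᵢS₁ᵢ | Y₂ᵢS₂ᵢ)` by subadditivity and because conditioning reduces entropy.
The last term is at least `H(S₁ⁿ | Y₁ⁿY₂ⁿS₂ⁿM) = Σᵢ H(S₁ᵢ | S₁^{i−1}Y₁ⁿY₂ⁿS₂ⁿM)`, and each summand is
at least `H(S₁ᵢ | Y₁ᵢY₂ᵢS₂ᵢXᵢ)`: by the `i`-th Markov chain, the latter does not change when the
last term of the chain is added to the conditioning, and that enlarged conditioning determines
`(S₁^{i−1}, Y₁ⁿ, Y₂ⁿ, S₂ⁿ, M)`.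

All these inequalities come from submodularity `H(A,B,C) + H(B) ≤ H(A,B) + H(B,C)`, which is
Gibbs' inequality against the law `P(a,b) P(b,c) / P(b)`; it is an equality when `A → B → C` is
Markov.
-/

section Distribution

variable {Ω α β γ : Type*} [Fintype Ω] [DecidableEq α] [DecidableEq β] [DecidableEq γ]
  {μ : Ω → ℝ}

lemma prob_nonneg (hμ : ∀ ω, 0 ≤ μ ω) (X : Ω → α) (x : α) : 0 ≤ prob μ X x :=
  sum_nonneg fun ω _ => hμ ω

lemma sum_prob_mul [Fintype α] (X : Ω → α) (c : α → ℝ) :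
    ∑ x, prob μ X x * c x = ∑ ω, μ ω * c (X ω) := by
  simp only [prob, sum_mul]
  rw [← sum_fiberwise univ X fun ω => μ ω * c (X ω)]
  refine sum_congr rfl fun x _ => sum_congr rfl fun ω hω => ?_
  rw [(mem_filter.1 hω).2]

lemma sum_prob [Fintype α] (X : Ω → α) : ∑ x, prob μ X x = ∑ ω, μ ω := by
  simpa using sum_prob_mul (μ := μ) X 1

lemma sum_prob_comp_mul [Fintype α] [Fintype β] (X : Ω → α) (f : α → β) (c : β → ℝ) :
    ∑ y, prob μ (fun ω => f (X ω)) y * c y = ∑ x, prob μ X x * c (f x) := by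
  rw [sum_prob_mul, sum_prob_mul X]

lemma prob_le_prob_comp (hμ : ∀ ω, 0 ≤ μ ω) (X : Ω → α) (f : α → β) (x : α) :
    prob μ X x ≤ prob μ (fun ω => f (X ω)) (f x) :=
  sum_le_sum_of_subset_of_nonneg (fun ω => by simp_all) fun ω _ _ => hμ ω

lemma prob_eq_sum_prob_pair [Fintype β] (X : Ω → α) (Y : Ω → β) (a : α) :
    prob μ X a = ∑ b, prob μ (fun ω => (X ω, Y ω)) (a, b) := by
  simp only [prob, Prod.mk.injEq]
  rw [← sum_fiberwise (univ.filter fun ω => X ω = a) Y μ]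
  simp only [filter_filter]

/-- The Markov chain `A → B → C` with the same `(A, B)` and `(B, C)` marginals as `(A, B, C)`. -/
noncomputable def markovLaw (μ : Ω → ℝ) (A : Ω → α) (B : Ω → β) (C : Ω → γ)
    (x : α × β × γ) : ℝ :=
  prob μ (fun ω => (A ω, B ω)) (x.1, x.2.1) * prob μ (fun ω => (B ω, C ω)) x.2
    / prob μ B x.2.1

section

variable (A : Ω → α) (B : Ω → β) (C : Ω → γ)

lemma markovLaw_nonneg (hμ : ∀ ω, 0 ≤ μ ω) (x : α × β × γ) : 0 ≤ markovLaw μ A B C x :=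
  div_nonneg (mul_nonneg (prob_nonneg hμ _ _) (prob_nonneg hμ _ _)) (prob_nonneg hμ _ _)

lemma marginals_pos_of_prob_pos (hμ : ∀ ω, 0 ≤ μ ω) {x : α × β × γ}
    (hx : 0 < prob μ (fun ω => (A ω, B ω, C ω)) x) :
    0 < prob μ (fun ω => (A ω, B ω)) (x.1, x.2.1) ∧ 0 < prob μ (fun ω => (B ω, C ω)) x.2
      ∧ 0 < prob μ B x.2.1 :=
  ⟨hx.trans_le (prob_le_prob_comp hμ _ (fun x => (x.1, x.2.1)) x),
    hx.trans_le (prob_le_prob_comp hμ _ Prod.snd x),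
    hx.trans_le (prob_le_prob_comp hμ _ (fun x => x.2.1) x)⟩

lemma markovLaw_pos (hμ : ∀ ω, 0 ≤ μ ω) {x : α × β × γ}
    (hx : 0 < prob μ (fun ω => (A ω, B ω, C ω)) x) : 0 < markovLaw μ A B C x := by
  obtain ⟨hAB, hBC, hB⟩ := marginals_pos_of_prob_pos A B C hμ hx
  exact div_pos (mul_pos hAB hBC) hB

end

variable {A : Ω → α} {B : Ω → β} {C : Ω → γ}

/-- When `P(b) = 0` both sides vanish, the right one because `x / 0 = 0`. -/
lemma MarkovChain.prob_eq_markovLaw (hμ : ∀ ω, 0 ≤ μ ω) (h : MarkovChain μ A B C)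
    (x : α × β × γ) : prob μ (fun ω => (A ω, B ω, C ω)) x = markovLaw μ A B C x := by
  rcases (prob_nonneg hμ _ x).eq_or_lt with hx | hx
  · have hm := h x.1 x.2.1 x.2.2
    rw [← hx, zero_mul] at hm
    rw [← hx, markovLaw, ← hm, zero_div]
  · rw [markovLaw, eq_div_iff (marginals_pos_of_prob_pos A B C hμ hx).2.2.ne']
    exact h x.1 x.2.1 x.2.2

end Distribution

lemma sum_mul_log_le_sum_mul_log {ι : Type*} [Fintype ι] {p q : ι → ℝ}
    (hp : ∀ i, 0 ≤ p i) (hq : ∀ i, 0 ≤ q i) (hpq : ∀ i, 0 < p i → 0 < q i)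
    (hsum : ∑ i, q i ≤ ∑ i, p i) :
    ∑ i, p i * Real.log (q i) ≤ ∑ i, p i * Real.log (p i) := by
  have hterm : ∀ i, p i * Real.log (q i) - p i * Real.log (p i) ≤ q i - p i := by
    intro i
    rcases (hp i).eq_or_lt with h | h
    · simp [← h, hq i]
    · have hlog := Real.log_le_sub_one_of_pos (div_pos (hpq i h) h)
      rw [Real.log_div (hpq i h).ne' h.ne'] at hlog
      calc p i * Real.log (q i) - p i * Real.log (p i)
          = p i * (Real.log (q i) - Real.log (p i)) := by ring
        _ ≤ p i * (q i / p i - 1) := mul_le_mul_of_nonneg_left hlog h.le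
        _ = q i - p i := by field_simp
  have hsum_terms := sum_le_sum fun i (_ : i ∈ univ) => hterm i
  rw [sum_sub_distrib, sum_sub_distrib] at hsum_terms
  linarith

section Entropy

variable {Ω α β γ : Type*} [Fintype Ω] {μ : Ω → ℝ}
  [Fintype α] [DecidableEq α] [Fintype β] [DecidableEq β] [Fintype γ] [DecidableEq γ]

lemma entH_eq_neg_sum (X : Ω → α) :
    entH μ X = -∑ x, prob μ X x * Real.log (prob μ X x) := by
  simp [entH]

lemma entH_comp_le (hμ : ∀ ω, 0 ≤ μ ω) (f : α → β) (X : Ω → α) :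
    entH μ (fun ω => f (X ω)) ≤ entH μ X := by
  rw [entH_eq_neg_sum, entH_eq_neg_sum, neg_le_neg_iff, sum_prob_comp_mul X f]
  refine sum_le_sum fun x _ => ?_
  rcases (prob_nonneg hμ X x).eq_or_lt with h | h
  · simp [← h]
  · exact mul_le_mul_of_nonneg_left (Real.log_le_log h (prob_le_prob_comp hμ X f x)) h.le

lemma entH_eq_of_comp (hμ : ∀ ω, 0 ≤ μ ω) {X : Ω → α} {Y : Ω → β} (f : α → β) (g : β → α)
    (hY : ∀ ω, Y ω = f (X ω)) (hX : ∀ ω, X ω = g (Y ω)) : entH μ Y = entH μ X :=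
  le_antisymm (by rw [funext hY]; exact entH_comp_le hμ f X)
    (by rw [funext hX]; exact entH_comp_le hμ g Y)

variable (A : Ω → α) (B : Ω → β) (C : Ω → γ)

lemma sum_markovLaw_le (hμ : ∀ ω, 0 ≤ μ ω) : ∑ x, markovLaw μ A B C x ≤ ∑ ω, μ ω := by
  have hfiber : ∀ a b, ∑ c, markovLaw μ A B C (a, b, c) ≤ prob μ (fun ω => (A ω, B ω)) (a, b) := by
    intro a b
    simp only [markovLaw, ← sum_div, ← mul_sum, ← prob_eq_sum_prob_pair, mul_div_assoc]
    exact mul_le_of_le_one_right (prob_nonneg hμ _ _) (div_self_le_one _)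
  calc ∑ x, markovLaw μ A B C x = ∑ a, ∑ b, ∑ c, markovLaw μ A B C (a, b, c) := by
        simp only [Fintype.sum_prod_type]
    _ ≤ ∑ a, ∑ b, prob μ (fun ω => (A ω, B ω)) (a, b) := by gcongr with a _ b; exact hfiber a b
    _ = ∑ ω, μ ω := by rw [← Fintype.sum_prod_type', sum_prob]

lemma sum_prob_mul_log_markovLaw (hμ : ∀ ω, 0 ≤ μ ω) :
    ∑ x, prob μ (fun ω => (A ω, B ω, C ω)) x * Real.log (markovLaw μ A B C x)
      = entH μ B - entH μ (fun ω => (A ω, B ω)) - entH μ (fun ω => (B ω, C ω)) := by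
  set p := prob μ (fun ω => (A ω, B ω, C ω))
  have hterm : ∀ x, p x * Real.log (markovLaw μ A B C x)
      = p x * Real.log (prob μ (fun ω => (A ω, B ω)) (x.1, x.2.1))
        + p x * Real.log (prob μ (fun ω => (B ω, C ω)) x.2) - p x * Real.log (prob μ B x.2.1) := by
    intro x
    rcases (prob_nonneg hμ (fun ω => (A ω, B ω, C ω)) x).eq_or_lt with h | h
    · simp [p, ← h]
    · obtain ⟨hAB, hBC, hB⟩ := marginals_pos_of_prob_pos A B C hμ h
      rw [markovLaw, Real.log_div (mul_pos hAB hBC).ne' hB.ne', Real.log_mul hAB.ne' hBC.ne']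
      ring
  have hAB := sum_prob_comp_mul (μ := μ) (fun ω => (A ω, B ω, C ω)) (fun x => (x.1, x.2.1))
    fun y => Real.log (prob μ (fun ω => (A ω, B ω)) y)
  have hBC := sum_prob_comp_mul (μ := μ) (fun ω => (A ω, B ω, C ω)) Prod.snd
    fun y => Real.log (prob μ (fun ω => (B ω, C ω)) y)
  have hB := sum_prob_comp_mul (μ := μ) (fun ω => (A ω, B ω, C ω)) (fun x => x.2.1)
    fun b => Real.log (prob μ B b)
  simp only [hterm, sum_add_distrib, sum_sub_distrib, entH_eq_neg_sum]
  rw [← hAB, ← hBC, ← hB]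
  ring

theorem entH_triple_add_entH_le (hμ : ∀ ω, 0 ≤ μ ω) :
    entH μ (fun ω => (A ω, B ω, C ω)) + entH μ B
      ≤ entH μ (fun ω => (A ω, B ω)) + entH μ (fun ω => (B ω, C ω)) := by
  have hgibbs := sum_mul_log_le_sum_mul_log (prob_nonneg hμ _) (markovLaw_nonneg A B C hμ)
    (fun x => markovLaw_pos A B C hμ) (by rw [sum_prob]; exact sum_markovLaw_le A B C hμ)
  rw [sum_prob_mul_log_markovLaw A B C hμ] at hgibbs
  linarith [entH_eq_neg_sum (μ := μ) fun ω => (A ω, B ω, C ω)]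

variable {A B C}

theorem MarkovChain.entH_triple_add_entH_eq (hμ : ∀ ω, 0 ≤ μ ω) (h : MarkovChain μ A B C) :
    entH μ (fun ω => (A ω, B ω, C ω)) + entH μ B
      = entH μ (fun ω => (A ω, B ω)) + entH μ (fun ω => (B ω, C ω)) := by
  have hlaw : ∑ x, prob μ (fun ω => (A ω, B ω, C ω)) x * Real.log (markovLaw μ A B C x)
      = ∑ x, prob μ (fun ω => (A ω, B ω, C ω)) x
          * Real.log (prob μ (fun ω => (A ω, B ω, C ω)) x) :=
    sum_congr rfl fun x _ => by rw [h.prob_eq_markovLaw hμ x]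
  rw [sum_prob_mul_log_markovLaw A B C hμ] at hlaw
  linarith [entH_eq_neg_sum (μ := μ) fun ω => (A ω, B ω, C ω)]

end Entropy

section ConditionalEntropy

variable {Ω α β γ δ : Type*} [Fintype Ω] {μ : Ω → ℝ}
  [Fintype α] [DecidableEq α] [Fintype β] [DecidableEq β] [Fintype γ] [DecidableEq γ]
  [Fintype δ] [DecidableEq δ]

lemma condH_nonneg (hμ : ∀ ω, 0 ≤ μ ω) (X : Ω → α) (Y : Ω → β) : 0 ≤ condH μ X Y :=
  sub_nonneg.2 (entH_comp_le hμ Prod.snd fun ω => (X ω, Y ω))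

lemma condH_eq_of_comp_left (hμ : ∀ ω, 0 ≤ μ ω) {X : Ω → α} {Y : Ω → β} (W : Ω → γ)
    (f : α → β) (g : β → α) (hY : ∀ ω, Y ω = f (X ω)) (hX : ∀ ω, X ω = g (Y ω)) :
    condH μ Y W = condH μ X W := by
  unfold condH
  rw [entH_eq_of_comp hμ (X := fun ω => (X ω, W ω)) (Y := fun ω => (Y ω, W ω))
    (fun x => (f x.1, x.2)) (fun y => (g y.1, y.2))
    (fun ω => by rw [hY]) (fun ω => by rw [hX])]

lemma condH_le_condH_of_comp (hμ : ∀ ω, 0 ≤ μ ω) (A : Ω → α) {W : Ω → β} {Z : Ω → γ}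
    (f : β → γ) (hZ : ∀ ω, Z ω = f (W ω)) : condH μ A W ≤ condH μ A Z := by
  have hAW : entH μ (fun ω => (A ω, Z ω, W ω)) = entH μ (fun ω => (A ω, W ω)) :=
    entH_eq_of_comp hμ (fun x => (x.1, f x.2, x.2)) (fun x => (x.1, x.2.2))
      (fun ω => by rw [hZ]) fun _ => rfl
  have hW : entH μ (fun ω => (Z ω, W ω)) = entH μ W :=
    entH_eq_of_comp hμ (fun w => (f w, w)) Prod.snd (fun ω => by rw [hZ]) fun _ => rfl
  have := entH_triple_add_entH_le A Z W hμ
  simp only [condH]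
  linarith

lemma condH_pair_eq (hμ : ∀ ω, 0 ≤ μ ω) (A : Ω → α) (B : Ω → β) (W : Ω → γ) :
    condH μ (fun ω => (A ω, B ω)) W = condH μ A W + condH μ B (fun ω => (A ω, W ω)) := by
  have := entH_eq_of_comp hμ (X := fun ω => ((A ω, B ω), W ω)) (Y := fun ω => (B ω, A ω, W ω))
    (fun x => (x.1.2, x.1.1, x.2)) (fun y => ((y.2.1, y.1), y.2.2)) (fun _ => rfl) fun _ => rfl
  simp only [condH]
  linarith

theorem MarkovChain.condH_eq (hμ : ∀ ω, 0 ≤ μ ω) {A : Ω → α} {B : Ω → β} {C : Ω → γ}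
    (h : MarkovChain μ A B C) : condH μ A (fun ω => (B ω, C ω)) = condH μ A B := by
  have := h.entH_triple_add_entH_eq hμ
  simp only [condH]
  linarith

theorem condH_pi_eq_sum (hμ : ∀ ω, 0 ≤ μ ω) : ∀ {n : ℕ} (S : Ω → Fin n → α) (T : Ω → β),
    condH μ S T = ∑ i : Fin n, condH μ (fun ω => S ω i)
      (fun ω => ((fun j : Fin i => S ω (Fin.castLE i.isLt.le j)), T ω))
  | 0, S, T => by
    rw [Fin.sum_univ_zero, condH, entH_eq_of_comp hμ (X := T) (Y := fun ω => (S ω, T ω))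
      (fun t => (Fin.elim0, t)) Prod.snd
      (fun ω => Prod.ext (funext fun j => j.elim0) rfl) fun _ => rfl, sub_self]
  | n + 1, S, T => by
    rw [condH_eq_of_comp_left hμ T (X := fun ω => (Fin.init (S ω), S ω (Fin.last n)))
      (fun p => Fin.snoc p.1 p.2) (fun s => (Fin.init s, s (Fin.last n)))
      (fun ω => (Fin.snoc_init_self (S ω)).symm) fun _ => rfl,
      condH_pair_eq hμ, condH_pi_eq_sum hμ (fun ω => Fin.init (S ω)) T, Fin.sum_univ_castSucc]
    rfl

theorem condH_pi_le_sum (hμ : ∀ ω, 0 ≤ μ ω) {n : ℕ} (U : Ω → Fin n → α) (W : Ω → β)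
    (g : Fin n → β → γ) : condH μ U W ≤ ∑ i, condH μ (fun ω => U ω i) (fun ω => g i (W ω)) := by
  rw [condH_pi_eq_sum hμ]
  exact sum_le_sum fun i _ => condH_le_condH_of_comp hμ _ (fun p => g i p.2) fun _ => rfl

theorem MarkovChain.condH_le_condH_of_comp (hμ : ∀ ω, 0 ≤ μ ω) {A : Ω → α} {B : Ω → β}
    {C : Ω → γ} (h : MarkovChain μ A B C) {Z : Ω → δ} (f : β × γ → δ)
    (hZ : ∀ ω, Z ω = f (B ω, C ω)) : condH μ A B ≤ condH μ A Z := by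
  rw [← h.condH_eq hμ]
  exact _root_.condH_le_condH_of_comp hμ A f hZ

end ConditionalEntropy

section MutualInformation

variable {Ω α β γ : Type*} [Fintype Ω] {μ : Ω → ℝ}
  [Fintype α] [DecidableEq α] [Fintype β] [DecidableEq β] [Fintype γ] [DecidableEq γ]

lemma mutInfo_eq_entH_sub_condH (X : Ω → α) (Y : Ω → β) :
    mutInfo μ X Y = entH μ X - condH μ X Y := by
  unfold mutInfo condH
  ring

lemma mutInfo_le_mutInfo_of_comp (hμ : ∀ ω, 0 ≤ μ ω) (M : Ω → α) {W : Ω → β} {Z : Ω → γ}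
    (f : β → γ) (hZ : ∀ ω, Z ω = f (W ω)) : mutInfo μ M Z ≤ mutInfo μ M W := by
  rw [mutInfo_eq_entH_sub_condH, mutInfo_eq_entH_sub_condH]
  exact sub_le_sub_left (condH_le_condH_of_comp hμ M f hZ) _

lemma mutInfo_pair_eq (hμ : ∀ ω, 0 ≤ μ ω) (M : Ω → α) (A : Ω → β) (W : Ω → γ) :
    mutInfo μ M (fun ω => (A ω, W ω))
      = mutInfo μ M W + condH μ A W - condH μ A (fun ω => (W ω, M ω)) := by
  have hMW := entH_eq_of_comp hμ (X := fun ω => (W ω, M ω)) (Y := fun ω => (M ω, W ω))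
    Prod.swap Prod.swap (fun _ => rfl) fun _ => rfl
  have hMAW := entH_eq_of_comp hμ (X := fun ω => (A ω, W ω, M ω))
    (Y := fun ω => (M ω, A ω, W ω)) (fun x => (x.2.2, x.1, x.2.1)) (fun y => (y.2.1, y.2.2, y.1))
    (fun _ => rfl) fun _ => rfl
  simp only [mutInfo, condH]
  linarith

end MutualInformation

set_option synthInstance.maxSize 2000

/-- Multiletter-to-single-letter step of the converse of
Proposition 4: if for each `i` the chain
`S₁ᵢ → (Y₁ᵢ,Y₂ᵢ,S₂ᵢ,Xᵢ) → (Y₁^{n∖i}, Y₂^{n∖i}, S₂^{n∖i}, M, S₁^{i−1})` is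
Markov and `I(M; Y₂ⁿ, S₂ⁿ) ≤ δ`, then
`I(M; Y₁ⁿ,Y₂ⁿ,S₁ⁿ,S₂ⁿ) ≤ Σᵢ [H(Y₁ᵢ,S₁ᵢ|Y₂ᵢ,S₂ᵢ) − H(S₁ᵢ|Y₁ᵢ,Y₂ᵢ,S₂ᵢ,Xᵢ)] + δ`. -/
theorem converse_secrecy_single_letterization
    {Ω 𝓜 𝓨₁ 𝓨₂ 𝓢₁ 𝓢₂ 𝓧 : Type*} [Fintype Ω]
    [Fintype 𝓜] [DecidableEq 𝓜]
    [Fintype 𝓨₁] [DecidableEq 𝓨₁] [Fintype 𝓨₂] [DecidableEq 𝓨₂]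
    [Fintype 𝓢₁] [DecidableEq 𝓢₁] [Fintype 𝓢₂] [DecidableEq 𝓢₂]
    [Fintype 𝓧] [DecidableEq 𝓧]
    (n : ℕ) (μ : Ω → ℝ) (hμ : IsPMF μ) (δ : ℝ)
    (M : Ω → 𝓜) (Y₁ : Ω → Fin n → 𝓨₁) (Y₂ : Ω → Fin n → 𝓨₂)
    (S₁ : Ω → Fin n → 𝓢₁) (S₂ : Ω → Fin n → 𝓢₂) (X : Ω → Fin n → 𝓧)
    (hMarkov : ∀ i : Fin n, MarkovChain μ (fun ω => S₁ ω i)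
      (fun ω => (Y₁ ω i, Y₂ ω i, S₂ ω i, X ω i))
      (fun ω => ((fun j : {j : Fin n // j ≠ i} => Y₁ ω j.1),
        (fun j : {j : Fin n // j ≠ i} => Y₂ ω j.1),
        (fun j : {j : Fin n // j ≠ i} => S₂ ω j.1),
        M ω,
        (fun j : Fin i => S₁ ω (Fin.castLE i.isLt.le j)))))
    (hSecrecy : mutInfo μ M (fun ω => (Y₂ ω, S₂ ω)) ≤ δ) :
    mutInfo μ M (fun ω => (Y₁ ω, Y₂ ω, S₁ ω, S₂ ω))
      ≤ ∑ i, (condH μ (fun ω => (Y₁ ω i, S₁ ω i)) (fun ω => (Y₂ ω i, S₂ ω i))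
          - condH μ (fun ω => S₁ ω i) (fun ω => (Y₁ ω i, Y₂ ω i, S₂ ω i, X ω i)))
        + δ := by
  have hμ₀ := hμ.1
  have hsplit := (mutInfo_le_mutInfo_of_comp hμ₀ M (W := fun ω => ((Y₁ ω, S₁ ω), (Y₂ ω, S₂ ω)))
    (fun p => (p.1.1, p.2.1, p.1.2, p.2.2)) fun _ => rfl).trans
      (mutInfo_pair_eq hμ₀ M (fun ω => (Y₁ ω, S₁ ω)) (fun ω => (Y₂ ω, S₂ ω))).le
  have hsub := (condH_eq_of_comp_left hμ₀ (fun ω => (Y₂ ω, S₂ ω))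
    (X := fun ω j => (Y₁ ω j, S₁ ω j)) (fun v => (fun j => (v j).1, fun j => (v j).2))
    (fun p j => (p.1 j, p.2 j)) (fun _ => rfl) fun _ => rfl).trans_le
      (condH_pi_le_sum hμ₀ _ _ fun i w => (w.1 i, w.2 i))
  have hmarkov : ∑ i, condH μ (fun ω => S₁ ω i) (fun ω => (Y₁ ω i, Y₂ ω i, S₂ ω i, X ω i))
      ≤ condH μ S₁ (fun ω => (Y₁ ω, (Y₂ ω, S₂ ω), M ω)) := by
    rw [condH_pi_eq_sum hμ₀]
    -- `funSplitAt i` reassembles a vector from its `i`-th coordinate and the others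
    refine sum_le_sum fun i _ => (hMarkov i).condH_le_condH_of_comp hμ₀ (fun w => (w.2.2.2.2.2,
      (Equiv.funSplitAt i _).symm (w.1.1, w.2.1), ((Equiv.funSplitAt i _).symm (w.1.2.1, w.2.2.1),
        (Equiv.funSplitAt i _).symm (w.1.2.2.1, w.2.2.2.1)), w.2.2.2.2.1)) fun ω => ?_
    refine Prod.ext rfl (Prod.ext ?_ (Prod.ext (Prod.ext ?_ ?_) rfl)) <;>
      exact (Equiv.symm_apply_apply _ _).symm
  have hchain := condH_pair_eq hμ₀ Y₁ S₁ fun ω => ((Y₂ ω, S₂ ω), M ω)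
  have hY₁ := condH_nonneg hμ₀ Y₁ fun ω => ((Y₂ ω, S₂ ω), M ω)
  rw [sum_sub_distrib]
  linarith
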